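/- arXiv:2605.11465 — 2 statements merged into one kernel-verified Lean document; each statement's English description precedes it below -/
import Mathlib

section
/- Let q be a prime power and let H be a subgroup of PGL₂(F_q) with |H| = r+1, acting naturally on the projective line P¹(F_q) by Möbius transformations. Let V_s denote the number of short orbits (orbits of cardinality < r+1). Then the number of long orbits (orbits of cardinality exactly r+1) equals (q+1)/(r+1) if V_s = 0; equals ⌈(q+1)/(r+1)⌉ − 1 if V_s = 1 or V_s = 2; and equals ⌈(q+1)/(r+1)⌉ − 2 if V_s = 3. -/
/-!
Orbit sizes divide `r + 1`, so a short orbit has at most `(r + 1) / 2` points. Hence the number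
`T` of points on short orbits satisfies `V_s ≤ T` and `2T ≤ V_s (r + 1)`, while
`T + L (r + 1) = q + 1` for the number `L` of long orbits. The latter gives
`L = ⌈(q + 1)/(r + 1)⌉ - k` whenever `(k - 1)(r + 1) < T ≤ k (r + 1)`, which holds with
`k = 1` when `V_s ∈ {1, 2}`. For `V_s = 3` the missing bound `T > r + 1` comes from
Burnside's lemma: a non-identity Möbius transformation fixes at most two points of `P¹`,
so `(L + 3)(r + 1) ≤ (q + 1) + 2r`.
-/

/-- The Möbius transformation `x ↦ (ax+b)/(cx+d)` on the projective line
`P¹(F) = F ∪ {∞}`, with `none` playing the role of `∞`. -/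
def mobiusMap {F : Type*} [Field F] [DecidableEq F] (a b c d : F) :
    Option F → Option F
  | none => if c = 0 then none else some (a / c)
  | some x => if c * x + d = 0 then none else some ((a * x + b) / (c * x + d))

/-- A permutation of `P¹(F)` is Möbius if it is given by some `(ax+b)/(cx+d)`
with `ad - bc ≠ 0`; such permutations are exactly the elements of `PGL₂(F_q)`
in its natural action on the projective line. -/
def IsMobius {F : Type*} [Field F] [DecidableEq F] (σ : Equiv.Perm (Option F)) : Prop :=
  ∃ a b c d : F, a * d - b * c ≠ 0 ∧ ∀ x, σ x = mobiusMap a b c d x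

open Finset

theorem add_mul_add_eq_zero_of_roots {R : Type*} [CommRing R] [IsDomain R] {α β γ x y : R}
    (hxy : x ≠ y) (hx : α * x ^ 2 + β * x + γ = 0) (hy : α * y ^ 2 + β * y + γ = 0) :
    α * (x + y) + β = 0 := by
  have h : (x - y) * (α * (x + y) + β) = 0 := by linear_combination hx - hy
  exact (mul_eq_zero.mp h).resolve_left (sub_ne_zero.mpr hxy)

theorem Option.exists_two_some_of_three {α : Type*} {P : Option α → Prop} {x y z : Option α}
    (hxy : x ≠ y) (hxz : x ≠ z) (hyz : y ≠ z) (hx : P x) (hy : P y) (hz : P z) :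
    ∃ s t : α, s ≠ t ∧ P (some s) ∧ P (some t) := by
  rcases x with _ | s <;> rcases y with _ | t <;> rcases z with _ | u <;> simp_all
  · exact ⟨t, u, hyz, hy, hz⟩
  · exact ⟨s, u, hxz, hx, hz⟩
  · exact ⟨s, t, hxy, hx, hy⟩
  · exact ⟨s, t, hxy, hx, hy⟩

section Mobius

variable {F : Type*} [Field F] [DecidableEq F]

theorem mobiusMap_none_eq_none_iff {a b c d : F} : mobiusMap a b c d none = none ↔ c = 0 := by
  simp [mobiusMap]

theorem quadratic_eq_zero_of_mobiusMap_some_eq_self {a b c d t : F}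
    (h : mobiusMap a b c d (some t) = some t) :
    c * t ^ 2 + (d - a) * t + -b = 0 := by
  rw [mobiusMap] at h
  split_ifs at h with h0
  rw [Option.some_inj, div_eq_iff h0] at h
  linear_combination -h

theorem mobiusMap_scalar_apply {a : F} (ha : a ≠ 0) (x : Option F) : mobiusMap a 0 0 a x = x := by
  cases x <;> simp [mobiusMap, ha]

theorem IsMobius.eq_one_of_three_fixed {σ : Equiv.Perm (Option F)} (hσ : IsMobius σ)
    {x y z : Option F} (hxy : x ≠ y) (hxz : x ≠ z) (hyz : y ≠ z)
    (hx : σ x = x) (hy : σ y = y) (hz : σ z = z) : σ = 1 := by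
  obtain ⟨a, b, c, d, hdet, hσ⟩ := hσ
  have hroot : ∀ t, σ (some t) = some t → c * t ^ 2 + (d - a) * t + -b = 0 :=
    fun t ht => quadratic_eq_zero_of_mobiusMap_some_eq_self (by rwa [← hσ])
  have hc : c = 0 := by
    by_contra hc
    have hfin : ∀ u, σ u = u → ∃ t, u = some t := fun u hu => by
      cases u with
      | none => exact absurd (mobiusMap_none_eq_none_iff.mp (hσ none ▸ hu)) hc
      | some t => exact ⟨t, rfl⟩
    obtain ⟨s, rfl⟩ := hfin x hx
    obtain ⟨t, rfl⟩ := hfin y hy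
    obtain ⟨u, rfl⟩ := hfin z hz
    have hst := add_mul_add_eq_zero_of_roots (by simpa using hxy) (hroot s hx) (hroot t hy)
    have hsu := add_mul_add_eq_zero_of_roots (by simpa using hxz) (hroot s hx) (hroot u hz)
    have : c * (t - u) = 0 := by linear_combination hst - hsu
    exact (mul_ne_zero hc (sub_ne_zero.mpr (by simpa using hyz))) this
  subst hc
  obtain ⟨s, t, hst, hs, ht⟩ :=
    Option.exists_two_some_of_three (P := fun u => σ u = u) hxy hxz hyz hx hy hz
  have hda : d - a = 0 := by
    simpa using add_mul_add_eq_zero_of_roots hst (hroot s hs) (hroot t ht)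
  have hb : b = 0 := by simpa [hda] using hroot s hs
  obtain rfl : d = a := sub_eq_zero.mp hda
  subst hb
  ext1 u
  rw [hσ, mobiusMap_scalar_apply (by simpa using hdet), Equiv.Perm.one_apply]

end Mobius

theorem Nat.eq_ceilDiv_sub_of_add_mul_eq {m n L T k : ℕ} (h : T + L * n = m)
    (hlo : k * n < T + n) (hhi : T ≤ k * n) : L = (m + n - 1) / n - k := by
  obtain ⟨n', rfl⟩ : ∃ n', n = n' + 1 :=
    Nat.exists_eq_add_one.mpr (Nat.pos_of_ne_zero fun hn => by subst hn; omega)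
  have hdiv : (m + (n' + 1) - 1) / (n' + 1) = L + k := by
    rw [Nat.add_succ_sub_one]
    apply Nat.div_eq_of_lt_le <;> linarith
  omega

namespace MulAction

variable {G X : Type*} [Group G] [MulAction G X]

theorem card_orbits_mul_card_le [Finite G] [Finite X] {k : ℕ}
    (hfix : ∀ g : G, g ≠ 1 → Nat.card (fixedBy X g) ≤ k) :
    Nat.card (orbitRel.Quotient G X) * Nat.card G ≤ Nat.card X + k * (Nat.card G - 1) := by
  classical
  have := Fintype.ofFinite G
  have := Fintype.ofFinite X
  have := Fintype.ofFinite (orbitRel.Quotient G X)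
  have hburnside := sum_card_fixedBy_eq_card_orbits_mul_card_group G X
  simp only [← Nat.card_eq_fintype_card] at hburnside
  have hone : Nat.card (fixedBy X (1 : G)) = Nat.card X := by simp
  have hrest : ∑ g ∈ univ.erase (1 : G), Nat.card (fixedBy X g) ≤ k * (Nat.card G - 1) := by
    calc ∑ g ∈ univ.erase (1 : G), Nat.card (fixedBy X g)
        ≤ #(univ.erase (1 : G)) * k :=
          sum_le_card_nsmul _ _ _ fun g hg => hfix g (ne_of_mem_erase hg)
      _ = k * (Nat.card G - 1) := by
        rw [card_erase_of_mem (mem_univ _), card_univ, Nat.card_eq_fintype_card, mul_comm]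
  rw [← hburnside, ← add_sum_erase _ _ (mem_univ 1), hone]
  exact Nat.add_le_add_left hrest _

namespace orbitRel.Quotient

theorem ncard_orbit_dvd_card (ω : orbitRel.Quotient G X) : ω.orbit.ncard ∣ Nat.card G := by
  rw [orbit_eq_orbit_out ω Quotient.out_eq', ← index_stabilizer]
  exact Subgroup.index_dvd_card _

theorem ncard_orbit_le_card [Finite G] (ω : orbitRel.Quotient G X) :
    ω.orbit.ncard ≤ Nat.card G :=
  Nat.le_of_dvd Nat.card_pos (ncard_orbit_dvd_card ω)

theorem two_mul_ncard_orbit_le_card [Finite G] {ω : orbitRel.Quotient G X}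
    (h : ω.orbit.ncard < Nat.card G) : 2 * ω.orbit.ncard ≤ Nat.card G := by
  by_contra! hlt
  exact h.ne (Nat.eq_of_dvd_of_lt_two_mul Nat.card_pos.ne' (ncard_orbit_dvd_card ω) hlt).symm

theorem one_le_ncard_orbit [Finite X] (ω : orbitRel.Quotient G X) : 1 ≤ ω.orbit.ncard :=
  (Set.ncard_pos (Set.toFinite _)).mpr (nonempty_orbit ω)

end orbitRel.Quotient

open orbitRel.Quotient

theorem ncard_setOf_orbit (p : Set X → Prop) :
    {O : Set X | (∃ x, O = orbit G x) ∧ p O}.ncard =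
      {ω : orbitRel.Quotient G X | p ω.orbit}.ncard := by
  have himage : {O : Set X | (∃ x, O = orbit G x) ∧ p O} =
      orbitRel.Quotient.orbit '' {ω : orbitRel.Quotient G X | p ω.orbit} := by
    ext O
    constructor
    · rintro ⟨⟨x, rfl⟩, hp⟩
      exact ⟨Quotient.mk'' x, hp, orbit_mk x⟩
    · rintro ⟨ω, hp, rfl⟩
      exact ⟨⟨Quotient.out ω, orbit_eq_orbit_out ω Quotient.out_eq'⟩, hp⟩
  rw [himage, Set.ncard_image_of_injective _ orbit_injective]

variable [Fintype (orbitRel.Quotient G X)]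

variable (G X) in
theorem sum_ncard_orbit [Finite X] :
    ∑ ω : orbitRel.Quotient G X, ω.orbit.ncard = Nat.card X := by
  rw [Nat.card_congr (selfEquivSigmaOrbits' G X), Nat.card_sigma]
  simp only [Nat.card_coe_set_eq]

theorem filter_not_ncard_orbit_lt [Finite G] :
    Finset.filter (fun ω : orbitRel.Quotient G X => ¬ ω.orbit.ncard < Nat.card G) univ =
      Finset.filter (fun ω : orbitRel.Quotient G X => ω.orbit.ncard = Nat.card G) univ :=
  Finset.filter_congr fun ω _ => by simpa using (ncard_orbit_le_card ω).ge_iff_eq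

theorem card_short_add_card_long [Finite G] :
    #{ω : orbitRel.Quotient G X | ω.orbit.ncard < Nat.card G} +
      #{ω : orbitRel.Quotient G X | ω.orbit.ncard = Nat.card G} =
      Nat.card (orbitRel.Quotient G X) := by
  rw [← filter_not_ncard_orbit_lt, card_filter_add_card_filter_not, card_univ,
    Nat.card_eq_fintype_card]

theorem sum_short_add_card_long_mul [Finite G] [Finite X] :
    ∑ ω : orbitRel.Quotient G X with ω.orbit.ncard < Nat.card G, ω.orbit.ncard +
      #{ω : orbitRel.Quotient G X | ω.orbit.ncard = Nat.card G} * Nat.card G = Nat.card X := by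
  rw [← sum_ncard_orbit G X,
    ← sum_filter_add_sum_filter_not univ (fun ω => ω.orbit.ncard < Nat.card G),
    filter_not_ncard_orbit_lt, card_eq_sum_ones, sum_mul, one_mul]
  congr 1
  exact sum_congr rfl fun ω hω => (mem_filter.mp hω).2.symm

theorem card_short_le_sum_short [Finite X] :
    #{ω : orbitRel.Quotient G X | ω.orbit.ncard < Nat.card G} ≤
      ∑ ω : orbitRel.Quotient G X with ω.orbit.ncard < Nat.card G, ω.orbit.ncard := by
  simpa using card_nsmul_le_sum _ _ 1 fun ω _ => one_le_ncard_orbit ω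

theorem two_mul_sum_short_le [Finite G] :
    2 * ∑ ω : orbitRel.Quotient G X with ω.orbit.ncard < Nat.card G, ω.orbit.ncard ≤
      #{ω : orbitRel.Quotient G X | ω.orbit.ncard < Nat.card G} * Nat.card G := by
  rw [mul_sum, ← smul_eq_mul]
  exact sum_le_card_nsmul _ _ _ fun ω hω => two_mul_ncard_orbit_le_card (mem_filter.mp hω).2

end MulAction

theorem card_fixedBy_le_two_of_isMobius {F : Type*} [Field F] [DecidableEq F] [Finite F]
    {H : Subgroup (Equiv.Perm (Option F))} (hH : ∀ σ ∈ H, IsMobius σ) {g : H} (hg : g ≠ 1) :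
    Nat.card (MulAction.fixedBy (Option F) g) ≤ 2 := by
  by_contra! h
  rw [Nat.card_coe_set_eq, Set.two_lt_ncard_iff] at h
  obtain ⟨x, y, z, hx, hy, hz, hxy, hxz, hyz⟩ := h
  exact hg (Subtype.ext ((hH g g.2).eq_one_of_three_fixed hxy hxz hyz hx hy hz))

/-- For a subgroup `H` of `PGL₂(F_q)` with `|H| = r+1` acting naturally on `P¹(F_q)`,
writing `V_s` for the number of short orbits, the number of long orbits (of size
exactly `r+1`) equals `(q+1)/(r+1)` if `V_s = 0`, `⌈(q+1)/(r+1)⌉ - 1` if `V_s ∈ {1,2}`,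
and `⌈(q+1)/(r+1)⌉ - 2` if `V_s = 3`.  (Here `⌈(q+1)/(r+1)⌉` is written as the ceiling
division `(q + 1 + (r+1) - 1) / (r+1)` of natural numbers.) -/
theorem stmt9 {F : Type*} [Field F] [Fintype F] [DecidableEq F]
    (r : ℕ) (H : Subgroup (Equiv.Perm (Option F))) (hH : ∀ σ ∈ H, IsMobius σ)
    (hcard : Nat.card H = r + 1)
    (Vs Lc : ℕ)
    (hVs : Vs = {O : Set (Option F) |
        (∃ x, O = MulAction.orbit H x) ∧ O.ncard < r + 1}.ncard)
    (hLc : Lc = {O : Set (Option F) |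
        (∃ x, O = MulAction.orbit H x) ∧ O.ncard = r + 1}.ncard) :
    (Vs = 0 → Lc = (Fintype.card F + 1) / (r + 1)) ∧
    (Vs = 1 ∨ Vs = 2 → Lc = (Fintype.card F + 1 + (r + 1) - 1) / (r + 1) - 1) ∧
    (Vs = 3 → Lc = (Fintype.card F + 1 + (r + 1) - 1) / (r + 1) - 2) := by
  classical
  have := Fintype.ofFinite (MulAction.orbitRel.Quotient H (Option F))
  have hq : Nat.card (Option F) = Fintype.card F + 1 := by simp
  rw [MulAction.ncard_setOf_orbit, Set.ncard_eq_toFinset_card', Set.toFinset_ofPred] at hVs hLc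
  have hsplit := MulAction.sum_short_add_card_long_mul (G := H) (X := Option F)
  have hlow := MulAction.card_short_le_sum_short (G := H) (X := Option F)
  have hhigh := MulAction.two_mul_sum_short_le (G := H) (X := Option F)
  have hburn := MulAction.card_orbits_mul_card_le (G := H) (X := Option F)
    fun g hg => card_fixedBy_le_two_of_isMobius hH hg
  rw [← MulAction.card_short_add_card_long] at hburn
  simp only [hcard, hq, Nat.add_sub_cancel, ← hVs, ← hLc] at hsplit hlow hhigh hburn
  set T := ∑ ω : MulAction.orbitRel.Quotient H (Option F) with ω.orbit.ncard < r + 1,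
    ω.orbit.ncard
  refine ⟨fun h0 => ?_, fun h12 => ?_, fun h3 => ?_⟩
  · have hT : T = 0 := by simpa [h0] using hhigh
    rw [← hsplit, hT, zero_add, Nat.mul_div_cancel _ r.succ_pos]
  · have hT : T ≤ 1 * (r + 1) := by rcases h12 with rfl | rfl <;> omega
    exact Nat.eq_ceilDiv_sub_of_add_mul_eq hsplit (by omega) hT
  · subst h3
    exact Nat.eq_ceilDiv_sub_of_add_mul_eq hsplit (by linarith) (by omega)
end

section
/- Let q be an odd prime power and d ∈ F_q with d ≠ 0. Set h = (4X⁴ − 12d²X² + 8d³X − d⁴)/(2X(X − d)(2X − d)) ∈ F_q(X). Then the extension F_q(X)/F_q(h) is Galois of degree 4; its Galois group is the cyclic group of order 4 generated by the F_q-algebra automorphism of F_q(X) sending X to d²/(2(d − X)). -/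
/-!
`σ` is the Möbius transformation `X ↦ d²/(2(d - X))`, which cycles `∞ → 0 → d/2 → d → ∞` and so
has order `4`; a direct computation shows that it fixes `h`. Hence `F(h)` lies in the fixed field
of `⟨σ⟩`, over which `F(X)` has degree `4` by Artin's theorem. On the other hand `h = p/q` with
`deg p = 4 > deg q`, so `[F(X) : F(h)] ≤ 4` by Lüroth's degree formula. Therefore `F(h)` is that
fixed field, and `F(X)/F(h)` is Galois with group `⟨σ⟩`.
-/

open Polynomial IntermediateField

theorem FiniteField.two_ne_zero_of_odd_card {F : Type*} [Field F] [Fintype F]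
    (hodd : Odd (Fintype.card F)) : (2 : F) ≠ 0 :=
  Ring.two_ne_zero fun hchar ↦ by
    have := FiniteField.even_card_iff_char_two.mp hchar
    rw [Nat.odd_iff] at hodd
    omega

section FixedField

variable {K L : Type*} [Field K] [Field L] [Algebra K L]

theorem IntermediateField.finrank_fixedField_eq_natCard (G : Subgroup (L ≃ₐ[K] L)) [Finite G] :
    Module.finrank (fixedField G) L = Nat.card G := by
  have := Fintype.ofFinite G
  rw [Nat.card_eq_fintype_card]
  exact FixedPoints.finrank_eq_card G L

theorem IntermediateField.eq_fixedField_of_le_of_finrank_le {G : Subgroup (L ≃ₐ[K] L)} [Finite G]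
    {E : IntermediateField K L} [FiniteDimensional E L] (hle : E ≤ fixedField G)
    (hrank : Module.finrank E L ≤ Nat.card G) : E = fixedField G :=
  eq_of_le_of_finrank_le' hle (hrank.trans (finrank_fixedField_eq_natCard G).ge)

theorem IntermediateField.mem_fixedField_zpowers {σ : L ≃ₐ[K] L} {x : L} (hx : σ x = x) :
    x ∈ fixedField (Subgroup.zpowers σ) :=
  (mem_fixedField_iff _ _).mpr fun _ hτ ↦
    Subgroup.zpowers_le.mpr (show σ ∈ MulAction.stabilizer _ x from hx) hτ

end FixedField

namespace RatFunc

variable {F : Type*} [Field F]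

theorem algHom_ext {L : Type*} [Semiring L] [Algebra F L] {φ ψ : RatFunc F →ₐ[F] L}
    (hX : φ RatFunc.X = ψ RatFunc.X) : φ = ψ := by
  have hpoly : φ.comp (IsScalarTower.toAlgHom F F[X] (RatFunc F))
      = ψ.comp (IsScalarTower.toAlgHom F F[X] (RatFunc F)) :=
    Polynomial.algHom_ext (by simpa [RatFunc.algebraMap_X] using hX)
  exact AlgHom.coe_ringHom_injective <|
    IsLocalization.ringHom_ext (nonZeroDivisors F[X]) congr(($hpoly : F[X] →+* L))

theorem two_ne_zero (h2 : (2 : F) ≠ 0) : (2 : RatFunc F) ≠ 0 :=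
  map_ofNat (algebraMap F (RatFunc F)) 2 ▸ (_root_.map_ne_zero _).mpr h2

theorem X_ne_algebraMap (c : F) : (RatFunc.X : RatFunc F) ≠ algebraMap F _ c :=
  fun h ↦ transcendental_X (h ▸ isAlgebraic_algebraMap c)

theorem algebraMap_sub_X_ne_zero (d : F) : algebraMap F (RatFunc F) d - RatFunc.X ≠ 0 :=
  sub_ne_zero.mpr (X_ne_algebraMap d).symm

theorem algebraMap_sub_two_mul_X_ne_zero (h2 : (2 : F) ≠ 0) (d : F) :
    algebraMap F (RatFunc F) d - 2 * RatFunc.X ≠ 0 := by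
  intro h
  apply X_ne_algebraMap (d / 2)
  rw [map_div₀, map_ofNat, eq_div_iff (two_ne_zero h2)]
  linear_combination -h

theorem quadratic_X_ne_zero {a : F} (ha : a ≠ 0) (b c : F) :
    algebraMap F _ a * RatFunc.X ^ 2 + algebraMap F _ b * RatFunc.X + algebraMap F (RatFunc F) c
      ≠ 0 := by
  intro h
  have hp := transcendental_iff.mp transcendental_X
    (Polynomial.C a * Polynomial.X ^ 2 + Polynomial.C b * Polynomial.X + Polynomial.C c)
    (by simpa [RatFunc.algebraMap_eq_C] using h)
  exact ha (by simpa using congr(($hp).coeff 2))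

theorem div_ne_C_of_natDegree_lt {p q : F[X]} (hq : q ≠ 0) (hpq : q.natDegree < p.natDegree)
    (c : F) : algebraMap F[X] (RatFunc F) p / algebraMap F[X] (RatFunc F) q ≠ RatFunc.C c := by
  intro h
  rw [div_eq_iff (algebraMap_ne_zero hq), ← algebraMap_C, ← map_mul] at h
  have := (natDegree_C_mul_le c q).trans_lt hpq
  rw [← algebraMap_injective F h] at this
  exact this.false

theorem finiteDimensional_adjoin_simple {f : RatFunc F} (hf : ¬∃ c, f = RatFunc.C c) :
    FiniteDimensional F⟮f⟯ (RatFunc F) :=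
  have := adjoin.finiteDimensional (f.isAlgebraic_adjoin_simple_X hf).isIntegral
  (IntermediateField.adjoinXEquiv F⟮f⟯).toLinearEquiv.finiteDimensional

theorem finrank_adjoin_div_le {p q : F[X]} (hp : p ≠ 0) (hq : q ≠ 0) :
    Module.finrank F⟮algebraMap F[X] (RatFunc F) p / algebraMap F[X] (RatFunc F) q⟯ (RatFunc F)
      ≤ max p.natDegree q.natDegree := by
  rw [finrank_eq_max_natDegree]
  exact max_le_max (natDegree_le_of_dvd ((num_dvd hp).mpr ⟨q, hq, rfl⟩) hp)
    (natDegree_le_of_dvd ((denom_dvd hq).mpr ⟨p, rfl⟩) hq)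

end RatFunc

section QuarterMoebius

variable {E : Type*} [Field E]

/-- On `ℙ¹` this cycles `∞ → 0 → d/2 → d → ∞`; the lemmas below hold away from that orbit. -/
def quarterMoebius (d x : E) : E := d ^ 2 / (2 * (d - x))

def quarterInvariant (d x : E) : E :=
  (4 * x ^ 4 - 12 * d ^ 2 * x ^ 2 + 8 * d ^ 3 * x - d ^ 4) / (2 * x * (x - d) * (2 * x - d))

theorem map_quarterMoebius {E' : Type*} [Field E'] (f : E →+* E') (d x : E) :
    f (quarterMoebius d x) = quarterMoebius (f d) (f x) := by
  simp [quarterMoebius, map_div₀, map_ofNat]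

theorem map_quarterInvariant {E' : Type*} [Field E'] (f : E →+* E') (d x : E) :
    f (quarterInvariant d x) = quarterInvariant (f d) (f x) := by
  simp [quarterInvariant, map_div₀, map_ofNat]

variable {d x : E}

theorem quarterMoebius_quarterMoebius (h2 : (2 : E) ≠ 0) (hdx : d - x ≠ 0)
    (hd2x : d - 2 * x ≠ 0) :
    quarterMoebius d (quarterMoebius d x) = d * (d - x) / (d - 2 * x) := by
  have hsub : d - d ^ 2 / (2 * (d - x)) = d * (d - 2 * x) / (2 * (d - x)) := by
    field_simp
    ring
  rw [quarterMoebius, quarterMoebius, hsub]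
  field_simp

theorem quarterMoebius_iterate_four (h2 : (2 : E) ≠ 0) (hd : d ≠ 0) (hx : x ≠ 0)
    (hdx : d - x ≠ 0) (hd2x : d - 2 * x ≠ 0) : (quarterMoebius d)^[4] x = x := by
  have hsub : d - d * (d - x) / (d - 2 * x) = -(d * x) / (d - 2 * x) := by
    rw [eq_div_iff hd2x, sub_mul, div_mul_cancel₀ _ hd2x]
    ring
  have hsub₂ : d - 2 * (d * (d - x) / (d - 2 * x)) = -d ^ 2 / (d - 2 * x) := by
    rw [eq_div_iff hd2x, sub_mul, mul_assoc, div_mul_cancel₀ _ hd2x]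
    ring
  change quarterMoebius d (quarterMoebius d (quarterMoebius d (quarterMoebius d x))) = x
  rw [quarterMoebius_quarterMoebius h2 hdx hd2x, quarterMoebius_quarterMoebius h2]
  · rw [hsub, hsub₂, mul_div_assoc', div_div_div_cancel_right₀ hd2x]
    field_simp
  · rw [hsub]
    simp [hd, hx, hd2x]
  · rw [hsub₂]
    simp [hd, hd2x]

theorem quarterInvariant_quarterMoebius (h2 : (2 : E) ≠ 0) (hd : d ≠ 0) (hdx : d - x ≠ 0)
    (hd2x : d - 2 * x ≠ 0) :
    quarterInvariant d (quarterMoebius d x) = quarterInvariant d x := by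
  have hxd : x - d ≠ 0 := by rwa [← neg_sub, neg_ne_zero]
  have h2xd : 2 * x - d ≠ 0 := by rwa [← neg_sub, neg_ne_zero]
  have hsub : d ^ 2 / (2 * (d - x)) - d = d * (2 * x - d) / (2 * (d - x)) := by
    field_simp
    ring
  have hsub₂ : 2 * (d ^ 2 / (2 * (d - x))) - d = d * x / (d - x) := by
    field_simp
    ring
  unfold quarterInvariant quarterMoebius
  rw [hsub, hsub₂]
  field_simp
  ring

end QuarterMoebius

section RatFuncAutomorphism

variable {F : Type*} [Field F] {d : F} {σ : RatFunc F ≃ₐ[F] RatFunc F}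

theorem quarterInvariant_X_eq_div (h2 : (2 : F) ≠ 0) (d : F) :
    ∃ p q : F[X], q ≠ 0 ∧ p.natDegree = 4 ∧ q.natDegree = 3 ∧
      quarterInvariant (algebraMap F (RatFunc F) d) RatFunc.X
        = algebraMap F[X] (RatFunc F) p / algebraMap F[X] (RatFunc F) q := by
  have h4 : (4 : F) ≠ 0 := by
    rw [show (4 : F) = 2 * 2 by norm_num]
    exact mul_ne_zero h2 h2
  have hq : (C 2 * X * (X - C d) * (C 2 * X - C d)).natDegree = 3 := by compute_degree!
  refine ⟨C 4 * X ^ 4 - C (12 * d ^ 2) * X ^ 2 + C (8 * d ^ 3) * X - C (d ^ 4), _,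
    ne_zero_of_natDegree_gt (n := 2) (by omega), by compute_degree!, hq, ?_⟩
  simp [quarterInvariant, map_ofNat RatFunc.C]

theorem orderOf_eq_four_of_apply_X (h2 : (2 : F) ≠ 0) (hd : d ≠ 0)
    (hσ : σ RatFunc.X = quarterMoebius (algebraMap F _ d) RatFunc.X) : orderOf σ = 4 := by
  set D := algebraMap F (RatFunc F) d
  have h2' := RatFunc.two_ne_zero h2
  have hD : D ≠ 0 := (_root_.map_ne_zero _).mpr hd
  have hDX := RatFunc.algebraMap_sub_X_ne_zero d
  have hD2X := RatFunc.algebraMap_sub_two_mul_X_ne_zero h2 d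
  have hσm (y : RatFunc F) : σ (quarterMoebius D y) = quarterMoebius D (σ y) :=
    (map_quarterMoebius (σ : RatFunc F →+* RatFunc F) D y).trans
      (congrArg (quarterMoebius · (σ y)) (σ.commutes d))
  have hsq : (σ ^ 2) RatFunc.X = D * (D - RatFunc.X) / (D - 2 * RatFunc.X) := by
    rw [pow_two, AlgEquiv.mul_apply, hσ, hσm, hσ, quarterMoebius_quarterMoebius h2' hDX hD2X]
  have hfour : (σ ^ 4) RatFunc.X = RatFunc.X := by
    simp only [pow_succ, pow_zero, one_mul, AlgEquiv.mul_apply, hσ, hσm]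
    exact quarterMoebius_iterate_four h2' hD RatFunc.X_ne_zero hDX hD2X
  have : Fact (Nat.Prime 2) := ⟨Nat.prime_two⟩
  refine orderOf_eq_prime_pow (p := 2) (n := 1) (fun h ↦ ?_)
    (AlgEquiv.coe_toAlgHom_injective (RatFunc.algHom_ext hfour))
  rw [pow_one] at h
  have hX := DFunLike.congr_fun h RatFunc.X
  rw [hsq, AlgEquiv.one_apply, div_eq_iff hD2X] at hX
  -- `σ² X = X` would make `X` a root of `2T² - 2dT + d²`
  refine RatFunc.quadratic_X_ne_zero h2 (-2 * d) (d ^ 2) ?_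
  simp only [map_mul, map_neg, map_pow, map_ofNat]
  linear_combination hX

theorem apply_quarterInvariant_X (h2 : (2 : F) ≠ 0) (hd : d ≠ 0)
    (hσ : σ RatFunc.X = quarterMoebius (algebraMap F _ d) RatFunc.X) :
    σ (quarterInvariant (algebraMap F _ d) RatFunc.X)
      = quarterInvariant (algebraMap F _ d) RatFunc.X := by
  have hmap : σ (quarterInvariant (algebraMap F _ d) RatFunc.X)
      = quarterInvariant (algebraMap F _ d) (σ RatFunc.X) :=
    (map_quarterInvariant (σ : RatFunc F →+* RatFunc F) _ RatFunc.X).trans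
      (congrArg (quarterInvariant · (σ RatFunc.X)) (σ.commutes d))
  rw [hmap, hσ, quarterInvariant_quarterMoebius (RatFunc.two_ne_zero h2)
    ((_root_.map_ne_zero _).mpr hd) (RatFunc.algebraMap_sub_X_ne_zero d)
    (RatFunc.algebraMap_sub_two_mul_X_ne_zero h2 d)]

end RatFuncAutomorphism

/-- Let `q` be odd, `d ∈ F_q*`, and
`h = (4X⁴ - 12d²X² + 8d³X - d⁴)/(2X(X - d)(2X - d)) ∈ F_q(X)`.  Then the extension
`F_q(X)/F_q(h)` is Galois of degree `4`, and its Galois group is the cyclic group of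
order `4` generated by the `F_q`-algebra automorphism `σ` of `F_q(X)` with
`σ(X) = d²/(2(d - X))`: `σ` has order `4` and the fixed field of `⟨σ⟩` is `F_q(h)`. -/
theorem stmt14 {F : Type*} [Field F] [Fintype F] (hodd : Odd (Fintype.card F))
    (d : F) (hd : d ≠ 0)
    (σ : RatFunc F ≃ₐ[F] RatFunc F)
    (hσ : σ RatFunc.X = algebraMap F (RatFunc F) (d ^ 2) /
        (algebraMap F (RatFunc F) 2 * (algebraMap F (RatFunc F) d - RatFunc.X)))
    (h : RatFunc F)
    (hh : h = (algebraMap F (RatFunc F) 4 * RatFunc.X ^ 4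
          - algebraMap F (RatFunc F) (12 * d ^ 2) * RatFunc.X ^ 2
          + algebraMap F (RatFunc F) (8 * d ^ 3) * RatFunc.X
          - algebraMap F (RatFunc F) (d ^ 4)) /
        (algebraMap F (RatFunc F) 2 * RatFunc.X * (RatFunc.X - algebraMap F (RatFunc F) d)
          * (algebraMap F (RatFunc F) 2 * RatFunc.X - algebraMap F (RatFunc F) d))) :
    IsGalois (IntermediateField.adjoin F {h}) (RatFunc F) ∧
    Module.finrank (IntermediateField.adjoin F {h}) (RatFunc F) = 4 ∧
    orderOf σ = 4 ∧
    IntermediateField.fixedField (Subgroup.zpowers σ) = IntermediateField.adjoin F {h} := by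
  have h2 := FiniteField.two_ne_zero_of_odd_card hodd
  replace hσ : σ RatFunc.X = quarterMoebius (algebraMap F _ d) RatFunc.X := by
    rw [hσ, map_pow, map_ofNat, quarterMoebius]
  replace hh : h = quarterInvariant (algebraMap F _ d) RatFunc.X := by
    simp only [hh, map_mul, map_pow, map_ofNat, quarterInvariant]
  have horder := orderOf_eq_four_of_apply_X h2 hd hσ
  have hfix : σ h = h := hh ▸ apply_quarterInvariant_X h2 hd hσ
  obtain ⟨p, q, hq, hp4, hq3, hpq⟩ := quarterInvariant_X_eq_div h2 d
  rw [hpq] at hh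
  have : FiniteDimensional F⟮h⟯ (RatFunc F) := hh ▸ RatFunc.finiteDimensional_adjoin_simple
    fun ⟨c, hc⟩ ↦ RatFunc.div_ne_C_of_natDegree_lt hq (by omega) c hc
  have hrank : Module.finrank F⟮h⟯ (RatFunc F) ≤ 4 := hh ▸
    (RatFunc.finrank_adjoin_div_le (ne_zero_of_natDegree_gt (n := 0) (by omega)) hq).trans
      (by omega)
  have hcard : Nat.card (Subgroup.zpowers σ) = 4 := by rw [Nat.card_zpowers, horder]
  have : Finite (Subgroup.zpowers σ) := Nat.finite_of_card_ne_zero (by omega)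
  have heq := eq_fixedField_of_le_of_finrank_le
    (adjoin_simple_le_iff.mpr (mem_fixedField_zpowers hfix)) (hcard ▸ hrank)
  exact ⟨heq ▸ IsGalois.of_fixed_field _ _, by rw [heq, finrank_fixedField_eq_natCard, hcard],
    horder, heq.symm⟩
end
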